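/- If A and B are Vahlen matrices (elements of the Lipschitz group Γ(V ⊕ ℝ^{1,1}) viewed in Mat₂(Cl(V))), then the pseudo-determinant is multiplicative: Δ(AB) = Δ(A)Δ(B). -/

import Mathlib

open CliffordAlgebra

noncomputable def negQhat {V : Type*} [AddCommGroup V] [Module ℝ V]
    (Q : QuadraticForm ℝ V) : QuadraticForm ℝ (V × ℝ × ℝ) :=
  QuadraticMap.prod (-Q) (QuadraticMap.prod QuadraticMap.sq (-QuadraticMap.sq))

/-- The Clifford map `j : V ⊕ ℝ^{1,1} → Mat₂(Cl(V))` (convention `v² = -Q v`). -/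
noncomputable def jmat {V : Type*} [AddCommGroup V] [Module ℝ V]
    (Q : QuadraticForm ℝ V) (x : V × ℝ × ℝ) :
    Matrix (Fin 2) (Fin 2) (CliffordAlgebra (-Q)) :=
  !![ι (-Q) x.1, algebraMap ℝ _ (x.2.1 - x.2.2);
     algebraMap ℝ _ (x.2.1 + x.2.2), -ι (-Q) x.1]

/-- A Vahlen matrix: an element of `Mat₂(Cl(V))` corresponding, under the
`(1,1)`-periodicity isomorphism `F`, to an element of the Lipschitz group
`Γ(V ⊕ ℝ^{1,1})`, i.e. an invertible `g` with `g x ĝ⁻¹ ∈ V ⊕ ℝ^{1,1}` for all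
`x ∈ V ⊕ ℝ^{1,1}`. -/
def IsVahlen {V : Type*} [AddCommGroup V] [Module ℝ V] (Q : QuadraticForm ℝ V)
    (F : CliffordAlgebra (negQhat Q) ≃ₐ[ℝ] Matrix (Fin 2) (Fin 2) (CliffordAlgebra (-Q)))
    (A : Matrix (Fin 2) (Fin 2) (CliffordAlgebra (-Q))) : Prop :=
  IsUnit (F.symm A) ∧ ∀ x : V × ℝ × ℝ, ∃ y : V × ℝ × ℝ,
    F.symm A * ι (negQhat Q) x * Ring.inverse (involute (F.symm A)) = ι (negQhat Q) y

/-- The pseudo-determinant `Δ([[a,b],[c,d]]) = a d~ - b c~`. -/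
noncomputable def pdet {V : Type*} [AddCommGroup V] [Module ℝ V] (Q : QuadraticForm ℝ V)
    (A : Matrix (Fin 2) (Fin 2) (CliffordAlgebra (-Q))) : CliffordAlgebra (-Q) :=
  A 0 0 * reverse (A 1 1) - A 0 1 * reverse (A 1 0)

/-!
Under `F`, Clifford conjugation `g ↦ reverse (involute g)` of `Cl(V ⊕ ℝ^{1,1})` becomes the
matrix conjugation `X ↦ X̄`, and `pdet X` is the `(0,0)` entry of `X X̄`. If `g` is in the
Lipschitz group, `N = ḡ g` satisfies `N x = x (involute N)` for all vectors `x`. For a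
nondegenerate form this twisted commutator with `x` is the contraction by `polar x`, and an
element killed by all these contractions is a scalar. So `X X̄ = Δ(X)` is real for Vahlen `X`,
and `(AB)(AB)‾ = A (B B̄) Ā = Δ(A) Δ(B)`.
-/

namespace CliffordAlgebra

section Contraction

variable {R M : Type*} [CommRing R] [AddCommGroup M] [Module R M] {Q : QuadraticForm R M}

theorem contractLeft_mul (d : Module.Dual R M) (a b : CliffordAlgebra Q) :
    contractLeft d (a * b) = contractLeft d a * b + involute a * contractLeft d b := by
  induction a using CliffordAlgebra.induction generalizing b with
  | algebraMap r =>
    rw [contractLeft_algebraMap_mul, contractLeft_algebraMap, AlgHom.commutes, zero_mul, zero_add]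
  | ι m =>
    rw [contractLeft_ι_mul, contractLeft_ι, involute_ι, Algebra.smul_def, neg_mul, sub_eq_add_neg]
  | add x y hx hy =>
    simp only [add_mul, map_add, hx, hy]
    abel
  | mul x y hx hy =>
    simp only [mul_assoc, hx, hy, map_mul, mul_add, add_mul]
    abel

theorem ι_mul_sub_involute_mul_ι (m : M) (x : CliffordAlgebra Q) :
    ι Q m * x - involute x * ι Q m = contractLeft (QuadraticMap.polarBilin Q m) x := by
  induction x using CliffordAlgebra.induction with
  | algebraMap r =>
    rw [contractLeft_algebraMap, AlgHom.commutes, Algebra.commutes, sub_self]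
  | ι u =>
    rw [involute_ι, contractLeft_ι, neg_mul, sub_neg_eq_add, ι_mul_ι_add_swap]
    rfl
  | add x y hx hy =>
    rw [map_add, map_add, mul_add, add_mul, ← hx, ← hy]
    abel
  | mul x y hx hy =>
    rw [contractLeft_mul, ← hx, ← hy]
    simp only [map_mul, sub_mul, mul_sub, mul_assoc]
    abel

variable {s : Set M}

theorem contractLeft_eq_zero_of_mem_adjoin_ι_image {d : Module.Dual R M} (hd : ∀ v ∈ s, d v = 0)
    {x : CliffordAlgebra Q} (hx : x ∈ Algebra.adjoin R (ι Q '' s)) : contractLeft d x = 0 := by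
  induction hx using Algebra.adjoin_induction with
  | mem a ha =>
    obtain ⟨v, hv, rfl⟩ := ha
    rw [contractLeft_ι, hd v hv, map_zero]
  | algebraMap r => rw [contractLeft_algebraMap]
  | add a b _ _ ha hb => rw [map_add, ha, hb, add_zero]
  | mul a b _ _ ha hb => rw [contractLeft_mul, ha, hb, zero_mul, mul_zero, add_zero]

theorem exists_eq_add_ι_mul_of_mem_adjoin_insert {b : M} {x : CliffordAlgebra Q}
    (hx : x ∈ Algebra.adjoin R (ι Q '' insert b s)) :
    ∃ y ∈ Algebra.adjoin R (ι Q '' s), ∃ z ∈ Algebra.adjoin R (ι Q '' s), x = y + ι Q b * z := by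
  set A := Algebra.adjoin R (ι Q '' s)
  -- `A + ι b A` contains `1` and is stable under left multiplication by every generator.
  let U : Submodule R (CliffordAlgebra Q) :=
    Subalgebra.toSubmodule A ⊔ (Subalgebra.toSubmodule A).map (LinearMap.mulLeft R (ι Q b))
  have mem_U {y z} (hy : y ∈ A) (hz : z ∈ A) : y + ι Q b * z ∈ U :=
    Submodule.add_mem_sup hy ⟨z, hz, rfl⟩
  have exists_of_mem_U {w} (hw : w ∈ U) : ∃ y ∈ A, ∃ z ∈ A, w = y + ι Q b * z := by
    obtain ⟨y, hy, _, ⟨z, hz, rfl⟩, rfl⟩ := Submodule.mem_sup.mp hw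
    exact ⟨y, hy, z, hz, rfl⟩
  suffices x ∈ U from exists_of_mem_U this
  have hx' : x ∈ Subalgebra.toSubmodule (Algebra.adjoin R (ι Q '' insert b s)) := hx
  rw [Algebra.adjoin_eq_span] at hx'
  refine Submodule.span_le.mpr (fun w hw => ?_) hx'
  induction hw using Submonoid.closure_induction_left with
  | one => simpa using mem_U (one_mem A) (zero_mem A)
  | mul_left _ hv w _ hw =>
    obtain ⟨v, hv, rfl⟩ := hv
    obtain ⟨y, hy, z, hz, rfl⟩ := exists_of_mem_U hw
    rcases hv with rfl | hv
    · have : ι Q v * (y + ι Q v * z) = algebraMap R _ (Q v) * z + ι Q v * y := by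
        rw [mul_add, ← mul_assoc, ι_sq_scalar, add_comm]
      rw [this]
      exact mem_U (mul_mem (algebraMap_mem A _) hz) hy
    · have : ι Q v * (y + ι Q b * z) =
          (ι Q v * y + algebraMap R _ (QuadraticMap.polar Q v b) * z) + ι Q b * -(ι Q v * z) := by
        rw [← ι_mul_ι_add_swap]
        noncomm_ring
      rw [this]
      have hv' : ι Q v ∈ A := Algebra.subset_adjoin ⟨v, hv, rfl⟩
      exact mem_U (add_mem (mul_mem hv' hy) (mul_mem (algebraMap_mem A _) hz))
        (neg_mem (mul_mem hv' hz))

theorem adjoin_ι_image_span (t : Set M) :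
    Algebra.adjoin R (ι Q '' Submodule.span R t) = Algebra.adjoin R (ι Q '' t) := by
  rw [← Submodule.map_coe, Submodule.map_span, Algebra.adjoin_span]

theorem exists_finset_mem_adjoin_ι_image (x : CliffordAlgebra Q) :
    ∃ t : Finset M, x ∈ Algebra.adjoin R (ι Q '' t) := by
  classical
  have mono {t t' : Finset M} (h : t ⊆ t') :
      Algebra.adjoin R (ι Q '' t) ≤ Algebra.adjoin R (ι Q '' t') :=
    Algebra.adjoin_mono (Set.image_mono (Finset.coe_subset.mpr h))
  induction x using CliffordAlgebra.induction with
  | algebraMap r => exact ⟨∅, algebraMap_mem _ r⟩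
  | ι m => exact ⟨{m}, Algebra.subset_adjoin ⟨m, Finset.mem_coe.mpr (Finset.mem_singleton_self m),
      rfl⟩⟩
  | add a b ha hb =>
    obtain ⟨t, ht⟩ := ha; obtain ⟨t', ht'⟩ := hb
    exact ⟨t ∪ t', add_mem (mono Finset.subset_union_left ht) (mono Finset.subset_union_right ht')⟩
  | mul a b ha hb =>
    obtain ⟨t, ht⟩ := ha; obtain ⟨t', ht'⟩ := hb
    exact ⟨t ∪ t', mul_mem (mono Finset.subset_union_left ht) (mono Finset.subset_union_right ht')⟩

theorem mem_bot_of_contractLeft_eq_zero_of_mem_adjoin {κ : Type*} {v : κ → M}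
    {d : κ → Module.Dual R M} (hd_self : ∀ i, d i (v i) = 1)
    (hd_ne : ∀ i j, i ≠ j → d i (v j) = 0) (t : Finset κ) {x : CliffordAlgebra Q}
    (hx : x ∈ Algebra.adjoin R (ι Q '' (v '' t))) (hxd : ∀ i ∈ t, contractLeft (d i) x = 0) :
    x ∈ (⊥ : Subalgebra R (CliffordAlgebra Q)) := by
  classical
  induction t using Finset.induction_on generalizing x with
  | empty => simpa using hx
  | insert i t hi ih =>
    rw [Finset.coe_insert, Set.image_insert_eq] at hx
    obtain ⟨y, hy, z, hz, rfl⟩ := exists_eq_add_ι_mul_of_mem_adjoin_insert hx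
    have hdi : ∀ w ∈ v '' t, d i w = 0 := by
      rintro _ ⟨j, hj, rfl⟩
      exact hd_ne i j (fun hij => hi (hij ▸ hj))
    have hz0 : z = 0 := by
      have h := hxd i (Finset.mem_insert_self i t)
      rwa [map_add, contractLeft_eq_zero_of_mem_adjoin_ι_image hdi hy, contractLeft_ι_mul,
        contractLeft_eq_zero_of_mem_adjoin_ι_image hdi hz, hd_self, one_smul, mul_zero, sub_zero,
        zero_add] at h
    subst hz0
    rw [mul_zero, add_zero] at hxd ⊢
    exact ih hy fun j hj => hxd j (Finset.mem_insert_of_mem hj)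

end Contraction

section Nondegenerate

variable {K M : Type*} [Field K] [AddCommGroup M] [Module K M] {Q : QuadraticForm K M}

theorem mem_bot_of_forall_contractLeft_polarBilin_eq_zero
    (hQ : ∀ w, (∀ u, QuadraticMap.polar Q w u = 0) → w = 0) {x : CliffordAlgebra Q}
    (hx : ∀ m, contractLeft (QuadraticMap.polarBilin Q m) x = 0) :
    x ∈ (⊥ : Subalgebra K (CliffordAlgebra Q)) := by
  -- `x` lies in the subalgebra generated by a finite-dimensional `W`; nondegeneracy makes
  -- `m ↦ polar m` restricted to `W` onto `W*`, which yields vectors dual to a basis of `W`.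
  obtain ⟨s, hs⟩ := exists_finset_mem_adjoin_ι_image x
  set W := Submodule.span K (s : Set M)
  let b := Module.finBasis K W
  let φ : M →ₗ[K] Module.Dual K W := (QuadraticMap.polarBilin Q).compl₂ W.subtype
  have hφ : Function.Surjective φ := by
    refine LinearMap.flip_injective_iff₂.mp <| (injective_iff_map_eq_zero _).mpr fun w hw =>
      Subtype.ext <| hQ w fun u => ?_
    rw [QuadraticMap.polar_comm]
    exact LinearMap.congr_fun hw u
  choose m hm using fun i => hφ (b.coord i)
  have hm_apply (i j) : QuadraticMap.polarBilin Q (m i) (b j) = b.coord i (b j) := by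
    rw [← hm]; rfl
  have hspan : Submodule.span K (Set.range fun i => (b i : M)) = W := by
    rw [Set.range_comp' Subtype.val b, ← Submodule.coe_subtype, Submodule.span_image, b.span_eq,
      Submodule.map_top, Submodule.range_subtype]
  refine mem_bot_of_contractLeft_eq_zero_of_mem_adjoin (v := fun i => (b i : M))
    (d := fun i => QuadraticMap.polarBilin Q (m i)) (fun i => ?_) (fun i j hij => ?_) Finset.univ
    ?_ fun i _ => hx (m i)
  · simp [hm_apply]
  · simp [hm_apply, Finsupp.single_eq_of_ne hij]
  · rw [Finset.coe_univ, Set.image_univ, ← adjoin_ι_image_span, hspan]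
    exact Algebra.adjoin_mono (Set.image_mono Submodule.subset_span) hs

theorem mem_bot_of_mul_ι_eq_ι_mul_involute
    (hQ : ∀ w, (∀ u, QuadraticMap.polar Q w u = 0) → w = 0) {z : CliffordAlgebra Q}
    (hz : ∀ m, z * ι Q m = ι Q m * involute z) : z ∈ (⊥ : Subalgebra K (CliffordAlgebra Q)) := by
  obtain ⟨r, hr⟩ := Algebra.mem_bot.mp <|
    mem_bot_of_forall_contractLeft_polarBilin_eq_zero hQ fun m => by
      rw [← ι_mul_sub_involute_mul_ι, involute_involute, hz, sub_self]
  exact Algebra.mem_bot.mpr ⟨r, by rw [← involute_involute z, ← hr, AlgHom.commutes]⟩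

theorem mul_reverse_involute_mem_bot
    (hQ : ∀ w, (∀ u, QuadraticMap.polar Q w u = 0) → w = 0) {g : CliffordAlgebra Q}
    (hg : IsUnit g) (hconj : ∀ x, ∃ y, g * ι Q x * Ring.inverse (involute g) = ι Q y) :
    g * reverse (involute g) ∈ (⊥ : Subalgebra K (CliffordAlgebra Q)) := by
  have hconj' (x) : ∃ y, g * ι Q x = ι Q y * involute g := by
    obtain ⟨y, hy⟩ := hconj x
    exact ⟨y, by rw [← hy, Ring.inverse_mul_cancel_right _ _ (hg.map involute)]⟩
  have hnorm : reverse (involute g) * g ∈ (⊥ : Subalgebra K (CliffordAlgebra Q)) := by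
    refine mem_bot_of_mul_ι_eq_ι_mul_involute hQ fun x => ?_
    obtain ⟨y, hy⟩ := hconj' x
    have hy_rev : ι Q x * reverse g = reverse (involute g) * ι Q y := by
      simpa only [reverse.map_mul, reverse_ι] using congrArg reverse hy
    calc reverse (involute g) * g * ι Q x = reverse (involute g) * ι Q y * involute g := by
          rw [mul_assoc, hy, mul_assoc]
      _ = ι Q x * involute (reverse (involute g) * g) := by
          rw [← hy_rev, map_mul, ← reverse_involute, involute_involute, mul_assoc]
  obtain ⟨c, hc⟩ := Algebra.mem_bot.mp hnorm
  obtain ⟨u, rfl⟩ := hg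
  refine Algebra.mem_bot.mpr ⟨c, ?_⟩
  calc algebraMap K _ c = ↑u * algebraMap K _ c * ↑u⁻¹ := by
        rw [← Algebra.commutes, Units.mul_inv_cancel_right]
    _ = ↑u * reverse (involute (u : CliffordAlgebra Q)) := by
        rw [hc, ← mul_assoc, Units.mul_inv_cancel_right]

end Nondegenerate

section Matrix

variable {R M : Type*} [CommRing R] [AddCommGroup M] [Module R M] {Q : QuadraticForm R M}

noncomputable def matrixConj (X : Matrix (Fin 2) (Fin 2) (CliffordAlgebra Q)) :
    Matrix (Fin 2) (Fin 2) (CliffordAlgebra Q) :=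
  !![reverse (X 1 1), -reverse (X 0 1); -reverse (X 1 0), reverse (X 0 0)]

theorem matrixConj_mul (X Y : Matrix (Fin 2) (Fin 2) (CliffordAlgebra Q)) :
    matrixConj (X * Y) = matrixConj Y * matrixConj X := by
  ext i j
  fin_cases i <;> fin_cases j <;>
    simp [matrixConj, Matrix.mul_apply, Fin.sum_univ_two, reverse.map_mul] <;> abel

theorem matrixConj_add (X Y : Matrix (Fin 2) (Fin 2) (CliffordAlgebra Q)) :
    matrixConj (X + Y) = matrixConj X + matrixConj Y := by
  ext i j
  fin_cases i <;> fin_cases j <;> simp [matrixConj] <;> abel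

theorem matrixConj_algebraMap (r : R) :
    matrixConj (algebraMap R (Matrix (Fin 2) (Fin 2) (CliffordAlgebra Q)) r) =
      algebraMap R _ r := by
  ext i j
  fin_cases i <;> fin_cases j <;>
    simp [matrixConj, Matrix.algebraMap_matrix_apply, reverse.commutes]

theorem mul_matrixConj_apply_zero_zero (X : Matrix (Fin 2) (Fin 2) (CliffordAlgebra Q)) :
    (X * matrixConj X) 0 0 = X 0 0 * reverse (X 1 1) - X 0 1 * reverse (X 1 0) := by
  simp [matrixConj, Matrix.mul_apply, Fin.sum_univ_two, sub_eq_add_neg]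

end Matrix

end CliffordAlgebra

section Vahlen

variable {V : Type*} [AddCommGroup V] [Module ℝ V] {Q : QuadraticForm ℝ V}

theorem polar_negQhat (w u : V × ℝ × ℝ) :
    QuadraticMap.polar (negQhat Q) w u =
      -QuadraticMap.polar Q w.1 u.1 + (2 * w.2.1 * u.2.1 - 2 * w.2.2 * u.2.2) := by
  simp only [negQhat, QuadraticMap.polar_prod, FunLike.coe_neg, QuadraticMap.polar_neg]
  simp only [QuadraticMap.polar, QuadraticMap.sq_apply]
  ring

theorem negQhat_nondegenerate (hQ : ∀ w : V, (∀ u, QuadraticMap.polar Q w u = 0) → w = 0)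
    (w : V × ℝ × ℝ) (hw : ∀ u, QuadraticMap.polar (negQhat Q) w u = 0) : w = 0 := by
  obtain ⟨v, a, b⟩ := w
  obtain rfl : v = 0 := hQ v fun u => by simpa [polar_negQhat] using hw (u, 0, 0)
  have ha := hw (0, 1, 0)
  have hb := hw (0, 0, 1)
  simp only [polar_negQhat, QuadraticMap.polar_zero_left] at ha hb
  obtain rfl : a = 0 := by linarith
  obtain rfl : b = 0 := by linarith
  rfl

theorem matrixConj_jmat (x : V × ℝ × ℝ) : matrixConj (jmat Q x) = -jmat Q x := by
  ext i j
  fin_cases i <;> fin_cases j <;> simp [matrixConj, jmat, reverse.commutes]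

variable {F : CliffordAlgebra (negQhat Q) ≃ₐ[ℝ] Matrix (Fin 2) (Fin 2) (CliffordAlgebra (-Q))}

theorem map_reverse_involute_eq_matrixConj (hF : ∀ x, F (ι (negQhat Q) x) = jmat Q x)
    (g : CliffordAlgebra (negQhat Q)) : F (reverse (involute g)) = matrixConj (F g) := by
  induction g using CliffordAlgebra.induction with
  | algebraMap r => rw [AlgHom.commutes, reverse.commutes, AlgEquiv.commutes, matrixConj_algebraMap]
  | ι x => rw [involute_ι, map_neg, reverse_ι, map_neg, hF, matrixConj_jmat]
  | add a b ha hb => rw [map_add, map_add, map_add, map_add, ha, hb, matrixConj_add]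
  | mul a b ha hb => rw [map_mul, reverse.map_mul, map_mul, map_mul, ha, hb, matrixConj_mul]

theorem IsVahlen.exists_mul_matrixConj_eq_algebraMap
    (hQ : ∀ w : V, (∀ u, QuadraticMap.polar Q w u = 0) → w = 0)
    (hF : ∀ x, F (ι (negQhat Q) x) = jmat Q x) {X : Matrix (Fin 2) (Fin 2) (CliffordAlgebra (-Q))}
    (hX : IsVahlen Q F X) : ∃ c : ℝ, X * matrixConj X = algebraMap ℝ _ c := by
  obtain ⟨c, hc⟩ := Algebra.mem_bot.mp <|
    mul_reverse_involute_mem_bot (negQhat_nondegenerate hQ) hX.1 hX.2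
  refine ⟨c, ?_⟩
  rw [← F.apply_symm_apply X, ← map_reverse_involute_eq_matrixConj hF, ← map_mul, ← hc,
    AlgEquiv.commutes]

theorem pdet_eq_of_mul_matrixConj_eq_algebraMap {X : Matrix (Fin 2) (Fin 2) (CliffordAlgebra (-Q))}
    {c : ℝ} (hX : X * matrixConj X = algebraMap ℝ _ c) : pdet Q X = algebraMap ℝ _ c := by
  rw [pdet, ← mul_matrixConj_apply_zero_zero, hX, Matrix.algebraMap_matrix_apply, if_pos rfl]

end Vahlen

theorem pdet_mul (V : Type*) [AddCommGroup V] [Module ℝ V]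
    (Q : QuadraticForm ℝ V)
    (hQnd : ∀ w : V, (∀ u : V, QuadraticMap.polar Q w u = 0) → w = 0)
    (F : CliffordAlgebra (negQhat Q) ≃ₐ[ℝ] Matrix (Fin 2) (Fin 2) (CliffordAlgebra (-Q)))
    (hF : ∀ x : V × ℝ × ℝ, F (ι (negQhat Q) x) = jmat Q x)
    (A B : Matrix (Fin 2) (Fin 2) (CliffordAlgebra (-Q)))
    (hA : IsVahlen Q F A) (hB : IsVahlen Q F B) :
    pdet Q (A * B) = pdet Q A * pdet Q B := by
  obtain ⟨a, ha⟩ := hA.exists_mul_matrixConj_eq_algebraMap hQnd hF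
  obtain ⟨b, hb⟩ := hB.exists_mul_matrixConj_eq_algebraMap hQnd hF
  have hab : A * B * matrixConj (A * B) = algebraMap ℝ _ (a * b) := by
    rw [matrixConj_mul, mul_assoc, ← mul_assoc B, hb, ← mul_assoc, ← Algebra.commutes, mul_assoc,
      ha, ← map_mul, mul_comm b a]
  rw [pdet_eq_of_mul_matrixConj_eq_algebraMap hab, pdet_eq_of_mul_matrixConj_eq_algebraMap ha,
    pdet_eq_of_mul_matrixConj_eq_algebraMap hb, map_mul]
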